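/- arXiv:2503.18890 — 6 statements merged into one kernel-verified Lean document; each statement's English description precedes it below -/
import Mathlib

section
/- For every positive integer N, the Hartley matrix H_N is symmetric, satisfies H_N² = 1 (the identity matrix), and is a member of the unitary group of N×N complex matrices. -/
/-- The `cas` function: `cas x = cos x + sin x`. -/
noncomputable def cas (x : ℝ) : ℝ := Real.cos x + Real.sin x

/-- The Hartley matrix of size `N`, indexed by `ZMod N`. -/
noncomputable def hartleyMatrix (N : ℕ) : Matrix (ZMod N) (ZMod N) ℂ :=
  fun a y => ((cas (2 * Real.pi * a.val * y.val / N) / Real.sqrt N : ℝ) : ℂ)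


/-!
The entries of `H_N` are real and depend symmetrically on the indices, so `H_N` is Hermitian and
unitarity reduces to `H_N² = 1`. That is the orthogonality of the cas vectors: by
`cas u * cas v = cos (u - v) + sin (u + v)`, the sum `∑ y, cas (2π a y / N) * cas (2π b y / N)`
is the real part of the character sum `∑ y, e((a - b) y)` plus the imaginary part of
`∑ y, e((a + b) y)`, for the standard character `e` of `ZMod N`; both sums are `N` or `0`.
-/

lemma cas_mul_cas (u v : ℝ) : cas u * cas v = Real.cos (u - v) + Real.sin (u + v) := by
  simp only [cas, Real.cos_sub, Real.sin_add]
  ring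

namespace ZMod

open Complex

variable {N : ℕ} [NeZero N]

lemma stdAddChar_mul_eq_exp_val (a y : ZMod N) :
    stdAddChar (a * y) = exp ((2 * Real.pi * a.val * y.val / N : ℝ) * I) := by
  have hcast : a * y = ((a.val * y.val : ℕ) : ℤ) := by simp
  rw [hcast, stdAddChar_coe]
  push_cast
  ring_nf

lemma sum_stdAddChar_mul (k : ZMod N) :
    ∑ y : ZMod N, stdAddChar (k * y) = if k = 0 then (N : ℂ) else 0 := by
  simp_rw [mul_comm k, AddChar.sum_mulShift k (isPrimitive_stdAddChar N), card]
  split_ifs <;> simp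

end ZMod

section Hartley

open Complex ZMod

variable {N : ℕ}

lemma sum_cas_mul_cas [NeZero N] (a b : ZMod N) :
    ∑ y : ZMod N, cas (2 * Real.pi * a.val * y.val / N) * cas (2 * Real.pi * b.val * y.val / N)
      = if a = b then (N : ℝ) else 0 := by
  have hterm : ∀ y : ZMod N,
      cas (2 * Real.pi * a.val * y.val / N) * cas (2 * Real.pi * b.val * y.val / N)
        = (stdAddChar ((a - b) * y)).re + (stdAddChar ((a + b) * y)).im := by
    intro y
    rw [sub_mul, add_mul, AddChar.map_sub_eq_div, AddChar.map_add_eq_mul,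
      stdAddChar_mul_eq_exp_val, stdAddChar_mul_eq_exp_val, ← exp_sub, ← exp_add, ← sub_mul,
      ← add_mul, ← ofReal_sub, ← ofReal_add, exp_ofReal_mul_I_re, exp_ofReal_mul_I_im,
      cas_mul_cas]
  simp_rw [hterm, Finset.sum_add_distrib, ← re_sum, ← im_sum, sum_stdAddChar_mul, sub_eq_zero]
  split_ifs <;> simp

lemma hartleyMatrix_isSymm : (hartleyMatrix N).IsSymm := by
  ext a y
  simp only [Matrix.transpose_apply, hartleyMatrix, mul_right_comm _ (y.val : ℝ)]

lemma hartleyMatrix_isHermitian : (hartleyMatrix N).IsHermitian := by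
  rw [Matrix.IsHermitian, Matrix.conjTranspose, hartleyMatrix_isSymm.eq]
  ext a y
  exact conj_ofReal _

lemma hartleyMatrix_mul_self [NeZero N] : hartleyMatrix N * hartleyMatrix N = 1 := by
  have hN : (N : ℝ) ≠ 0 := Nat.cast_ne_zero.2 (NeZero.ne N)
  ext a b
  rw [Matrix.mul_apply, Matrix.one_apply]
  simp_rw [hartleyMatrix_isSymm.apply (A := hartleyMatrix N) b]
  simp only [hartleyMatrix, ← ofReal_mul, ← ofReal_sum, div_mul_div_comm,
    Real.mul_self_sqrt (Nat.cast_nonneg N), ← Finset.sum_div]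
  rw [sum_cas_mul_cas]
  split_ifs <;> simp [hN]

end Hartley

/-- The Hartley matrix is symmetric, squares to the identity, and is unitary. -/
theorem hartleyMatrix_symm_sq_one_unitary (N : ℕ) [NeZero N] :
    (hartleyMatrix N).IsSymm ∧
      hartleyMatrix N * hartleyMatrix N = 1 ∧
        hartleyMatrix N ∈ Matrix.unitaryGroup (ZMod N) ℂ := by
  refine ⟨hartleyMatrix_isSymm, hartleyMatrix_mul_self, ?_⟩
  rw [Matrix.mem_unitaryGroup_iff, Matrix.star_eq_conjTranspose, hartleyMatrix_isHermitian.eq]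
  exact hartleyMatrix_mul_self
end

section
/- For every positive integer N and all h, v ∈ ZMod N, the sum over u ∈ ZMod N of cas(2π·(u·h).val/N)·cas(2π·(u·v).val/N) equals N if h = v and equals 0 otherwise. -/
open Complex Finset

lemma sum_stdAddChar_mul (N : ℕ) [NeZero N] (k : ZMod N) :
    ∑ u : ZMod N, ZMod.stdAddChar (u * k) = if k = 0 then (N : ℂ) else 0 := by
  split_ifs with hk
  · simp [hk, ZMod.card]
  · have h := AddChar.sum_eq_zero_of_ne_one (ZMod.isPrimitive_stdAddChar N hk)
    simpa [AddChar.mulShift_apply, mul_comm k] using h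

lemma stdAddChar_eq_exp (N : ℕ) [NeZero N] (w : ZMod N) :
    ZMod.stdAddChar w = Complex.exp ((2 * Real.pi * w.val / N : ℝ) * I) := by
  rw [ZMod.stdAddChar_apply, ZMod.toCircle_apply]
  push_cast
  ring_nf

lemma cas_eq_re_add_im (N : ℕ) [NeZero N] (w : ZMod N) :
    cas (2 * Real.pi * w.val / N) = (ZMod.stdAddChar w).re + (ZMod.stdAddChar w).im := by
  rw [stdAddChar_eq_exp, Complex.exp_ofReal_mul_I_re, Complex.exp_ofReal_mul_I_im, cas]

lemma conj_stdAddChar (N : ℕ) [NeZero N] (w : ZMod N) :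
    (starRingEnd ℂ) (ZMod.stdAddChar w) = ZMod.stdAddChar (-w) := by
  rw [ZMod.stdAddChar_apply, ZMod.stdAddChar_apply, ← Circle.coe_inv_eq_conj,
    ← AddChar.map_neg_eq_inv]

/-- Orthogonality of the Hartley characters:
`∑ u, cas(2π (u h).val / N) * cas(2π (u v).val / N)` is `N` if `h = v` and `0` otherwise. -/
theorem cas_orthogonality (N : ℕ) [NeZero N] (h v : ZMod N) :
    ∑ u : ZMod N,
        cas (2 * Real.pi * (u * h).val / N) * cas (2 * Real.pi * (u * v).val / N) =
      if h = v then (N : ℝ) else 0 := by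
  have key : ∀ u : ZMod N,
      cas (2 * Real.pi * (u * h).val / N) * cas (2 * Real.pi * (u * v).val / N) =
        (ZMod.stdAddChar (u * (h - v))).re + (ZMod.stdAddChar (u * (h + v))).im := by
    intro u
    rw [cas_eq_re_add_im, cas_eq_re_add_im]
    have e1 : ZMod.stdAddChar (u * (h - v)) =
        ZMod.stdAddChar (u * h) * (starRingEnd ℂ) (ZMod.stdAddChar (u * v)) := by
      rw [conj_stdAddChar, ← AddChar.map_add_eq_mul]
      ring_nf
    have e2 : ZMod.stdAddChar (u * (h + v)) =
        ZMod.stdAddChar (u * h) * ZMod.stdAddChar (u * v) := by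
      rw [← AddChar.map_add_eq_mul]; ring_nf
    rw [e1, e2]
    simp [Complex.mul_re, Complex.mul_im, Complex.conj_re, Complex.conj_im]
    ring
  rw [Finset.sum_congr rfl fun u _ => key u, Finset.sum_add_distrib,
    ← Complex.re_sum, ← Complex.im_sum, sum_stdAddChar_mul, sum_stdAddChar_mul]
  rcases eq_or_ne h v with hv | hv
  · rw [hv, sub_self, if_pos rfl, if_pos rfl]
    split_ifs <;> simp
  · rw [if_neg (sub_ne_zero.mpr hv), if_neg hv]
    split_ifs <;> simp
end

section
/- Let k be a natural number and N : Fin k → ℕ with N i ≥ 1 for all i, and let G = Π i, ZMod (N i). Then the |G|×|G| complex matrix M indexed by G with entries M_{a,y} = (Π i, cas(2π·(a i).val·(y i).val/(N i))) / √|G| is a member of the unitary group. -/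
/-!
The matrix is `|G|^{-1/2}` times the Kronecker product of the one-dimensional Hartley matrices
`H_N a y = cas (2π a y / N)`, which are real symmetric with `H_N * H_N = N • 1`; Kronecker products
multiply factorwise, so the whole product squares to `|G| • 1`. For `H_N * H_N`, write
`cas (2π a y / N) = Re ψ(a y) + Im ψ(a y)` with `ψ` the standard additive character of `ZMod N`:
the entry `∑ y cas(2π a y/N) cas(2π y b/N)` becomes `Re ∑ y ψ(y (a - b)) + Im ∑ y ψ(y (a + b))`,
and the character sums are `N` or `0`, in particular real.
-/

open Finset Matrix

namespace Matrix

variable {ι R : Type*} [Fintype ι] [CommSemiring R] {m n p : ι → Type*}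

def piKronecker (A : ∀ i, Matrix (m i) (n i) R) : Matrix (∀ i, m i) (∀ i, n i) R :=
  of fun a b => ∏ i, A i (a i) (b i)

@[simp]
theorem piKronecker_apply (A : ∀ i, Matrix (m i) (n i) R) (a : ∀ i, m i) (b : ∀ i, n i) :
    piKronecker A a b = ∏ i, A i (a i) (b i) :=
  rfl

theorem transpose_piKronecker (A : ∀ i, Matrix (m i) (n i) R) :
    (piKronecker A)ᵀ = piKronecker fun i => (A i)ᵀ :=
  rfl

theorem piKronecker_mul [DecidableEq ι] [∀ i, Fintype (n i)] (A : ∀ i, Matrix (m i) (n i) R)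
    (B : ∀ i, Matrix (n i) (p i) R) :
    piKronecker A * piKronecker B = piKronecker fun i => A i * B i := by
  ext a c
  simp only [mul_apply, piKronecker_apply, ← prod_mul_distrib, Fintype.prod_sum]

theorem piKronecker_smul_one [∀ i, DecidableEq (m i)] (c : ι → R) :
    piKronecker (fun i => c i • (1 : Matrix (m i) (m i) R)) = (∏ i, c i) • 1 := by
  ext a b
  simp only [piKronecker_apply, smul_apply, one_apply, smul_eq_mul, mul_ite, mul_one, mul_zero,
    Fintype.prod_ite_zero, funext_iff]

theorem inv_sqrt_smul_mul_transpose {n : Type*} [Fintype n] [DecidableEq n]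
    {K : Matrix n n ℝ} {d : ℝ} (hd : 0 < d) (hK : K * Kᵀ = d • 1) :
    (√d)⁻¹ • K * ((√d)⁻¹ • K)ᵀ = 1 := by
  rw [transpose_smul, smul_mul_smul_comm, hK, ← mul_inv, Real.mul_self_sqrt hd.le, smul_smul,
    inv_mul_cancel₀ hd.ne', one_smul]

theorem map_ofReal_mem_unitaryGroup {n : Type*} [Fintype n] [DecidableEq n]
    {A : Matrix n n ℝ} (hA : A * Aᵀ = 1) :
    A.map ((↑) : ℝ → ℂ) ∈ unitaryGroup n ℂ := by
  rw [mem_unitaryGroup_iff, star_eq_conjTranspose,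
    ← conjTranspose_map _ fun x => (Complex.conj_ofReal x).symm,
    conjTranspose_eq_transpose_of_trivial]
  calc A.map Complex.ofRealHom * Aᵀ.map Complex.ofRealHom = (A * Aᵀ).map Complex.ofRealHom :=
        Matrix.map_mul.symm
    _ = 1 := by rw [hA, Matrix.map_one _ (map_zero _) (map_one _)]

end Matrix

-- `cas u * cas v = cos (u - v) + sin (u + v)`, for `z = exp (i u)` and `w = exp (i v)`.
theorem Complex.re_add_im_mul_re_add_im (z w : ℂ) :
    (z.re + z.im) * (w.re + w.im) = (z * (starRingEnd ℂ) w).re + (z * w).im := by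
  simp only [mul_re, mul_im, conj_re, conj_im]
  ring

namespace ZMod

noncomputable def hartleyMatrix (N : ℕ) : Matrix (ZMod N) (ZMod N) ℝ :=
  of fun a y => cas (2 * Real.pi * a.val * y.val / N)

theorem hartleyMatrix_transpose (N : ℕ) : (hartleyMatrix N)ᵀ = hartleyMatrix N := by
  ext a y
  simp only [hartleyMatrix, transpose_apply, of_apply]
  ring_nf

variable {N : ℕ} [NeZero N]

theorem cas_eq_re_add_im_stdAddChar (a y : ZMod N) :
    cas (2 * Real.pi * a.val * y.val / N) = (stdAddChar (a * y)).re + (stdAddChar (a * y)).im := by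
  have hval : ((a.val * y.val : ℕ) : ZMod N) = a * y := by simp
  have hexp : stdAddChar (a * y) =
      Complex.exp ((2 * Real.pi * a.val * y.val / N : ℝ) * Complex.I) := by
    rw [← hval, stdAddChar_apply, toCircle_natCast]
    push_cast
    ring_nf
  rw [hexp, Complex.exp_ofReal_mul_I_re, Complex.exp_ofReal_mul_I_im, cas]

theorem hartleyMatrix_mul_self : hartleyMatrix N * hartleyMatrix N = (N : ℝ) • 1 := by
  ext a b
  have sum_char (c : ZMod N) : ∑ y, stdAddChar (y * c) = if c = 0 then (N : ℂ) else 0 := by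
    rw [AddChar.sum_mulShift c (isPrimitive_stdAddChar N), card, Nat.cast_ite, Nat.cast_zero]
  calc ∑ y, hartleyMatrix N a y * hartleyMatrix N y b
      = (∑ y, stdAddChar (y * (a - b))).re + (∑ y, stdAddChar (y * (a + b))).im := by
        simp only [Complex.re_sum, Complex.im_sum, ← sum_add_distrib, hartleyMatrix, of_apply,
          cas_eq_re_add_im_stdAddChar, Complex.re_add_im_mul_re_add_im, ← AddChar.map_neg_eq_conj,
          ← AddChar.map_add_eq_mul]
        congr! 4 <;> ring
    _ = ((N : ℝ) • (1 : Matrix (ZMod N) (ZMod N) ℝ)) a b := by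
        simp only [sum_char, sub_eq_zero, Matrix.smul_apply, one_apply]
        split_ifs <;> simp

end ZMod

/-- The multiplicative Hartley transform over `G = Π i, ZMod (N i)` is unitary. -/
theorem multiplicativeHartley_mem_unitaryGroup (k : ℕ) (N : Fin k → ℕ)
    [∀ i, NeZero (N i)] :
    (fun a y : (∀ i, ZMod (N i)) =>
        (((∏ i, cas (2 * Real.pi * (a i).val * (y i).val / (N i))) /
            Real.sqrt (Fintype.card (∀ i, ZMod (N i))) : ℝ) : ℂ)) ∈
      Matrix.unitaryGroup (∀ i, ZMod (N i)) ℂ := by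
  set d : ℝ := ((Fintype.card (∀ i, ZMod (N i)) : ℕ) : ℝ)
  set K := piKronecker fun i => ZMod.hartleyMatrix (N i)
  have hd : d = ∏ i, (N i : ℝ) := by simp only [d, Fintype.card_pi, ZMod.card, Nat.cast_prod]
  have hK : K * Kᵀ = d • 1 := by
    simp only [K, transpose_piKronecker, ZMod.hartleyMatrix_transpose, piKronecker_mul,
      ZMod.hartleyMatrix_mul_self, piKronecker_smul_one, hd]
  have hM : (fun a y : (∀ i, ZMod (N i)) =>
        (((∏ i, cas (2 * Real.pi * (a i).val * (y i).val / (N i))) / √d : ℝ) : ℂ)) =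
      ((√d)⁻¹ • K).map ((↑) : ℝ → ℂ) := by
    ext a y
    simp [K, ZMod.hartleyMatrix, div_eq_inv_mul]
  rw [hM]
  exact map_ofReal_mem_unitaryGroup (inv_sqrt_smul_mul_transpose (by positivity) hK)
end

section
/- For every positive integer N and all g, h, v ∈ ZMod N, the sum over u ∈ ZMod N of cas(2π·((g + u)·h).val/N)·cas(2π·(u·v).val/N) equals N·cos(2π·(g·h).val/N)·[v = h] + N·sin(2π·(g·h).val/N)·[v = −h], where [P] is 1 if P holds and 0 otherwise (so both terms contribute when v = h = −h). -/
open Complex ZMod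

lemma exp_re' (j : ℤ) (N : ℕ) : (Complex.exp (2*Real.pi*I*j/N)).re = Real.cos (2*Real.pi*j/N) := by
  rw [show (2*Real.pi*I*(j:ℂ)/N) = ((2*Real.pi*j/N : ℝ):ℂ) * I by push_cast; ring,
    Complex.exp_ofReal_mul_I_re]

lemma exp_im' (j : ℤ) (N : ℕ) : (Complex.exp (2*Real.pi*I*j/N)).im = Real.sin (2*Real.pi*j/N) := by
  rw [show (2*Real.pi*I*(j:ℂ)/N) = ((2*Real.pi*j/N : ℝ):ℂ) * I by push_cast; ring,
    Complex.exp_ofReal_mul_I_im]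

lemma psi_sub_re {N : ℕ} [NeZero N] (a b : ZMod N) :
    (stdAddChar (a - b)).re = Real.cos (2*Real.pi*a.val/N - 2*Real.pi*b.val/N) := by
  have h : (a - b) = (((a.val : ℤ) - (b.val : ℤ) : ℤ) : ZMod N) := by push_cast; simp
  rw [h, ZMod.stdAddChar_coe, exp_re']; push_cast; ring_nf

lemma psi_add_im {N : ℕ} [NeZero N] (a b : ZMod N) :
    (stdAddChar (a + b)).im = Real.sin (2*Real.pi*a.val/N + 2*Real.pi*b.val/N) := by
  have h : (a + b) = (((a.val : ℤ) + (b.val : ℤ) : ℤ) : ZMod N) := by push_cast; simp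
  rw [h, ZMod.stdAddChar_coe, exp_im']; push_cast; ring_nf

/-- Shifted Hartley orthogonality: the sum over `u` of
`cas(2π ((g+u)h).val / N) * cas(2π (u v).val / N)` equals
`N cos(2π (g h).val / N) [v = h] + N sin(2π (g h).val / N) [v = -h]`. -/
theorem cas_shifted_orthogonality (N : ℕ) [NeZero N] (g h v : ZMod N) :
    ∑ u : ZMod N,
        cas (2 * Real.pi * ((g + u) * h).val / N) * cas (2 * Real.pi * (u * v).val / N) =
      (N : ℝ) * Real.cos (2 * Real.pi * (g * h).val / N) * (if v = h then 1 else 0) +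
        (N : ℝ) * Real.sin (2 * Real.pi * (g * h).val / N) * (if v = -h then 1 else 0) := by
  classical
  set ψ : AddChar (ZMod N) ℂ := ZMod.stdAddChar with hψ
  have key : ∀ u : ZMod N,
      cas (2 * Real.pi * ((g + u) * h).val / N) * cas (2 * Real.pi * (u * v).val / N)
        = (ψ (g*h) * ψ (u * (h - v))).re + (ψ (g*h) * ψ (u * (h + v))).im := by
    intro u
    have h1 : ψ (g*h) * ψ (u * (h - v)) = ψ ((g+u)*h - u*v) := by
      rw [← AddChar.map_add_eq_mul]; ring_nf
    have h2 : ψ (g*h) * ψ (u * (h + v)) = ψ ((g+u)*h + u*v) := by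
      rw [← AddChar.map_add_eq_mul]; ring_nf
    rw [h1, h2, hψ, psi_sub_re, psi_add_im, cas, cas, Real.cos_sub, Real.sin_add]
    ring
  rw [Finset.sum_congr rfl (fun u _ => key u), Finset.sum_add_distrib,
    ← Complex.re_sum, ← Complex.im_sum, ← Finset.mul_sum, ← Finset.mul_sum,
    AddChar.sum_mulShift _ (ZMod.isPrimitive_stdAddChar N),
    AddChar.sum_mulShift _ (ZMod.isPrimitive_stdAddChar N)]
  have hre : (ψ (g*h)).re = Real.cos (2 * Real.pi * (g*h).val / N) := by
    have := psi_sub_re (g*h) 0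
    simpa using this
  have him : (ψ (g*h)).im = Real.sin (2 * Real.pi * (g*h).val / N) := by
    have := psi_add_im (g*h) 0
    simpa using this
  have e1 : (h - v = 0) ↔ (v = h) := by rw [sub_eq_zero, eq_comm]
  have e2 : (h + v = 0) ↔ (v = -h) := by rw [add_comm, add_eq_zero_iff_eq_neg]
  rw [if_congr e1 rfl rfl, if_congr e2 rfl rfl, ZMod.card]
  split_ifs with h1 h2 <;>
    simp [hre, him, Complex.mul_re, Complex.mul_im] <;> ring
end

section
/- Let N be a positive integer and u ∈ ZMod N with u ≠ −u. Let A be the N×N complex matrix indexed by ZMod N with A_{a,b} = 1 if b − a ∈ {u, −u} and A_{a,b} = 0 otherwise. Then for every h ∈ ZMod N, the Hartley vector ψ_h : ZMod N → ℂ defined by ψ_h(g) = cas(2π·(g·h).val/N) satisfies A.mulVec ψ_h = (2·cos(2π·(u·h).val/N)) • ψ_h. -/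
/-- The adjacency matrix of the Cayley graph of `ZMod N` with connection set `{u, -u}`. -/
def cayleyAdj (N : ℕ) (u : ZMod N) : Matrix (ZMod N) (ZMod N) ℂ :=
  fun a b => if b - a ∈ ({u, -u} : Finset (ZMod N)) then 1 else 0

lemma cas_add_int_mul_two_pi (x : ℝ) (k : ℤ) : cas (x + k * (2 * Real.pi)) = cas x := by
  unfold cas
  rw [Real.cos_add_int_mul_two_pi, Real.sin_add_int_mul_two_pi]

lemma cas_rep (N : ℕ) [NeZero N] (v : ZMod N) (m : ℤ) (hm : (m : ZMod N) = v) :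
    cas (2 * Real.pi * v.val / N) = cas (2 * Real.pi * m / N) := by
  have h1 : ((v.val : ℤ) : ZMod N) = (m : ZMod N) := by
    rw [hm]; simp [ZMod.natCast_val]
  have h2 : (N : ℤ) ∣ (v.val : ℤ) - m := by
    rwa [← ZMod.intCast_zmod_eq_zero_iff_dvd, Int.cast_sub, sub_eq_zero]
  obtain ⟨k, hk⟩ := h2
  have hN : (N : ℝ) ≠ 0 := Nat.cast_ne_zero.mpr (NeZero.ne N)
  have : (2 * Real.pi * v.val / N) = 2 * Real.pi * m / N + k * (2 * Real.pi) := by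
    have hk' : (v.val : ℤ) = m + N * k := by linarith [hk]
    have : ((v.val : ℤ) : ℝ) = m + N * k := by exact_mod_cast hk'
    push_cast at this ⊢
    rw [this]; field_simp
  rw [this, cas_add_int_mul_two_pi]

/-- The Hartley vectors `ψ_h(g) = cas(2π (g h).val / N)` are eigenvectors of the
adjacency matrix of the Cayley graph of `ZMod N` with connection set `{u, -u}`,
with eigenvalue `2 cos(2π (u h).val / N)`. -/
theorem cayley_adjacency_hartley_eigen (N : ℕ) [NeZero N] (u : ZMod N) (hu : u ≠ -u)
    (h : ZMod N) :
    (cayleyAdj N u).mulVec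
        (fun g => ((cas (2 * Real.pi * (g * h).val / N) : ℝ) : ℂ)) =
      ((2 * Real.cos (2 * Real.pi * (u * h).val / N) : ℝ) : ℂ) •
        (fun g => ((cas (2 * Real.pi * (g * h).val / N) : ℝ) : ℂ)) := by
  funext g
  have key : ∀ b : ZMod N, b - g ∈ ({u, -u} : Finset (ZMod N)) ↔ b = g + u ∨ b = g - u := by
    intro b
    simp only [Finset.mem_insert, Finset.mem_singleton, sub_eq_iff_eq_add]
    constructor
    · rintro (rfl | rfl) <;> [left; right] <;> ring
    · rintro (rfl | rfl) <;> [left; right] <;> ring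
  have hne : g + u ≠ g - u := by
    intro hh
    apply hu
    have := add_right_cancel (a := u) (b := g) (c := -u) (by rw [add_comm, hh]; ring)
    exact this
  -- compute mulVec
  simp only [Matrix.mulVec, dotProduct, cayleyAdj, Pi.smul_apply, smul_eq_mul]
  have : ∀ b : ZMod N,
      (if b - g ∈ ({u, -u} : Finset (ZMod N)) then (1:ℂ) else 0) *
        ((cas (2 * Real.pi * (b * h).val / N) : ℝ) : ℂ)
      = (if b = g + u then ((cas (2 * Real.pi * (b * h).val / N) : ℝ) : ℂ) else 0)
        + (if b = g - u then ((cas (2 * Real.pi * (b * h).val / N) : ℝ) : ℂ) else 0) := by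
    intro b
    simp only [key b]
    by_cases h1 : b = g + u <;> by_cases h2 : b = g - u <;> simp_all
  rw [Finset.sum_congr rfl (fun b _ => this b), Finset.sum_add_distrib,
    Finset.sum_ite_eq' Finset.univ (g + u), Finset.sum_ite_eq' Finset.univ (g - u)]
  simp only [Finset.mem_univ, if_true]
  set θ : ℝ := 2 * Real.pi * ((g * h).val : ℝ) / N
  set φ : ℝ := 2 * Real.pi * ((u * h).val : ℝ) / N
  have e1 : cas (2 * Real.pi * (((g + u) * h).val : ℝ) / N) = cas (θ + φ) := by
    have := cas_rep N ((g + u) * h) ((g * h).val + (u * h).val) (by push_cast [ZMod.natCast_val, ZMod.cast_id']; ring)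
    rw [this]
    congr 1
    push_cast
    unfold θ φ
    ring
  have e2 : cas (2 * Real.pi * (((g - u) * h).val : ℝ) / N) = cas (θ - φ) := by
    have := cas_rep N ((g - u) * h) ((g * h).val - (u * h).val) (by push_cast [ZMod.natCast_val, ZMod.cast_id']; ring)
    rw [this]
    congr 1
    push_cast
    unfold θ φ
    ring
  rw [e1, e2]
  have : cas (θ + φ) + cas (θ - φ) = 2 * Real.cos φ * cas θ := by
    unfold cas
    rw [Real.cos_add, Real.cos_sub, Real.sin_add, Real.sin_sub]
    ring
  push_cast
  rw [← Complex.ofReal_add]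
  rw [this]
  push_cast
  ring
end

section
/- Let N be a positive integer and u ∈ ZMod N with u ≠ −u. Let A be the N×N complex matrix indexed by ZMod N with A_{a,b} = 1 if b − a ∈ {u, −u} and A_{a,b} = 0 otherwise, and for h ∈ ZMod N let ψ_h : ZMod N → ℂ be ψ_h(g) = cas(2π·(g·h).val/N). Then for every real t and every h ∈ ZMod N, (Matrix.exp((i·t) • A)).mulVec ψ_h = exp(i·t·2·cos(2π·(u·h).val/N)) • ψ_h, where Matrix.exp denotes the matrix exponential and i the imaginary unit. -/
/-!
The shift by `u` and `-u` acts on a function `f` by `f (g + u) + f (g - u)`. For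
`f = ψ_h` the angle of `g ± u` is that of `g` plus or minus the angle `θ` of `u`, modulo `2π`
(which absorbs the reduction in `ZMod.val`), so the addition formula
`cas (x + θ) + cas (x - θ) = 2 cos θ cas x` makes `ψ_h` an eigenvector of `A` with eigenvalue
`2 cos θ`. An eigenvector of `M` for `μ` is one of `exp M` for `exp μ`, termwise in the series.
-/

open NormedSpace

open scoped Matrix

open scoped Matrix.Norms.Operator in
theorem Matrix.exp_mulVec_of_mulVec_eq_smul {𝕂 n : Type*} [RCLike 𝕂] [Fintype n] [DecidableEq n]
    {M : Matrix n n 𝕂} {v : n → 𝕂} {μ : 𝕂} (hv : M *ᵥ v = μ • v) :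
    exp M *ᵥ v = exp μ • v := by
  have hpow (k : ℕ) : M ^ k *ᵥ v = μ ^ k • v := by
    induction k with
    | zero => simp
    | succ k ih => rw [pow_succ', ← Matrix.mulVec_mulVec, ih, Matrix.mulVec_smul, hv, smul_smul,
        ← pow_succ]
  have hM := (exp_series_hasSum_exp' (𝕂 := 𝕂) M).map (Matrix.mulVec.addMonoidHomLeft v)
    (continuous_id.matrix_mulVec continuous_const)
  have hμ := (exp_series_hasSum_exp' (𝕂 := 𝕂) μ).smul_const v
  refine hM.unique (hμ.congr_fun fun k => ?_)
  simp [Matrix.mulVec.addMonoidHomLeft, Matrix.smul_mulVec, hpow, smul_smul]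

theorem cas_periodic : Function.Periodic cas (2 * Real.pi) :=
  Real.cos_periodic.add Real.sin_periodic

theorem cas_add_add_cas_sub (x θ : ℝ) : cas (x + θ) + cas (x - θ) = 2 * Real.cos θ * cas x := by
  simp only [cas, Real.cos_add, Real.sin_add, Real.cos_sub, Real.sin_sub]
  ring

theorem cas_two_pi_mul_val_intCast_div (N : ℕ) [NeZero N] (n : ℤ) :
    cas (2 * Real.pi * ((n : ZMod N).val : ℝ) / N) = cas (2 * Real.pi * n / N) := by
  have hN : (N : ℝ) ≠ 0 := Nat.cast_ne_zero.mpr (NeZero.ne N)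
  have hval : ((n : ZMod N).val : ℝ) = n - N * (n / N : ℤ) := by
    rw [← Int.cast_natCast, ZMod.val_intCast, Int.emod_def]
    push_cast
    ring
  rw [hval]
  convert cas_periodic.sub_int_mul_eq (n / N : ℤ) using 2
  field_simp

theorem cas_two_pi_mul_val_add_div (N : ℕ) [NeZero N] (a b : ZMod N) :
    cas (2 * Real.pi * (a + b).val / N) =
      cas (2 * Real.pi * a.val / N + 2 * Real.pi * b.val / N) := by
  have hab : a + b = ((a.val + b.val : ℤ) : ZMod N) := by simp
  rw [hab, cas_two_pi_mul_val_intCast_div]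
  congr 1
  push_cast
  ring

theorem cas_two_pi_mul_val_sub_div (N : ℕ) [NeZero N] (a b : ZMod N) :
    cas (2 * Real.pi * (a - b).val / N) =
      cas (2 * Real.pi * a.val / N - 2 * Real.pi * b.val / N) := by
  have hab : a - b = ((a.val - b.val : ℤ) : ZMod N) := by simp
  rw [hab, cas_two_pi_mul_val_intCast_div]
  congr 1
  push_cast
  ring

theorem cayleyAdj_mulVec {N : ℕ} [NeZero N] {u : ZMod N} (hu : u ≠ -u) (f : ZMod N → ℂ) :
    cayleyAdj N u *ᵥ f = fun g => f (g + u) + f (g - u) := by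
  funext g
  rw [Matrix.mulVec, dotProduct, ← Equiv.sum_comp (Equiv.addLeft g)]
  simp only [cayleyAdj, Equiv.coe_addLeft, add_sub_cancel_left, ite_mul, one_mul, zero_mul,
    Finset.sum_ite_mem, Finset.univ_inter, Finset.sum_pair hu, ← sub_eq_add_neg]

noncomputable def hartleyVec (N : ℕ) (h : ZMod N) : ZMod N → ℂ :=
  fun g => ((cas (2 * Real.pi * (g * h).val / N) : ℝ) : ℂ)

theorem cayleyAdj_mulVec_hartleyVec {N : ℕ} [NeZero N] {u : ZMod N} (hu : u ≠ -u) (h : ZMod N) :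
    cayleyAdj N u *ᵥ hartleyVec N h =
      ((2 * Real.cos (2 * Real.pi * (u * h).val / N) : ℝ) : ℂ) • hartleyVec N h := by
  rw [cayleyAdj_mulVec hu]
  funext g
  simp only [hartleyVec, Pi.smul_apply, smul_eq_mul, add_mul, sub_mul,
    cas_two_pi_mul_val_add_div, cas_two_pi_mul_val_sub_div]
  rw [← Complex.ofReal_add, cas_add_add_cas_sub, Complex.ofReal_mul]

/-- The Hartley vectors `ψ_h` are eigenvectors of the continuous-time quantum walk
operator `exp((i t) • A)` on the Cayley graph of `ZMod N` with connection set `{u, -u}`,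
with eigenvalue `exp(i t 2 cos(2π (u h).val / N))`. -/
theorem quantum_walk_hartley_eigen (N : ℕ) [NeZero N] (u : ZMod N) (hu : u ≠ -u)
    (t : ℝ) (h : ZMod N) :
    (exp (((Complex.I * (t : ℂ)) • cayleyAdj N u :
        Matrix (ZMod N) (ZMod N) ℂ))).mulVec
        (fun g => ((cas (2 * Real.pi * (g * h).val / N) : ℝ) : ℂ)) =
      Complex.exp (Complex.I * t * (2 * Real.cos (2 * Real.pi * (u * h).val / N))) •
        (fun g => ((cas (2 * Real.pi * (g * h).val / N) : ℝ) : ℂ)) := by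
  have hwalk : ((Complex.I * t) • cayleyAdj N u) *ᵥ hartleyVec N h =
      (Complex.I * t * (2 * Real.cos (2 * Real.pi * (u * h).val / N))) • hartleyVec N h := by
    rw [Matrix.smul_mulVec, cayleyAdj_mulVec_hartleyVec hu, smul_smul]
    push_cast
    rfl
  rw [Complex.exp_eq_exp_ℂ]
  exact Matrix.exp_mulVec_of_mulVec_eq_smul hwalk
end
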